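/- For $f \in C^d(\mathbb{R})$, any $0 < R < 1$, and each $j = 0,\dots,d$, there is a constant $C_{\Lambda,R}$ such that $|\partial_h^j T_{p,\Lambda} f(x,h) - T_{d-j} f^{(j)}(x,h)| \le C_{\Lambda,R}\,|v_{f^{(k_j)}}(x)|_2\,|h|^{d+1-j}$ for $|h| \le R$, where $k_j = \min\{j, p+1\}$, $T_{d-j} f^{(j)}$ is the classical Taylor polynomial of $f^{(j)}$ of degree $d-j$, and $v_g(x) = [g^{(i)}(x)]_i$ collects derivatives of $g$ up to order $d - k_j$ past the base. -/

import Mathlib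

open scoped Matrix

/-- The confluent Vandermonde matrix `V_d` (`d = p + r`): columns `0,…,p` are
`j! e_j`, columns `p+1,…,d` are `[λ_k^i]_{i=0}^d`. -/
noncomputable def Vand (p r : ℕ) (l : Fin r → ℝ) :
    Matrix (Fin (p + r + 1)) (Fin (p + r + 1)) ℝ :=
  Matrix.of fun i c =>
    if hc : (c : ℕ) ≤ p then (if (i : ℕ) = (c : ℕ) then ((c : ℕ).factorial : ℝ) else 0)
    else l ⟨(c : ℕ) - (p + 1), by have := c.isLt; omega⟩ ^ (i : ℕ)

/-- The row vector `[1, h, …, h^p, e^{λ_1 h}, …, e^{λ_r h}]`. -/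
noncomputable def expBasis (p r : ℕ) (l : Fin r → ℝ) (h : ℝ) : Fin (p + r + 1) → ℝ :=
  fun c =>
    if hc : (c : ℕ) ≤ p then h ^ (c : ℕ)
    else Real.exp (l ⟨(c : ℕ) - (p + 1), by have := c.isLt; omega⟩ * h)

/-- The vector of derivatives `v_f(x) = [f^(j)(x)]_{j=0}^d`. -/
noncomputable def vder (d : ℕ) (f : ℝ → ℝ) (x : ℝ) : Fin (d + 1) → ℝ :=
  fun i => iteratedDeriv (i : ℕ) f x

/-- The generalized Taylor expansion
`T_{p,Λ} f (x,h) = [1,…,h^p,e^{λ_1 h},…,e^{λ_r h}] V_d⁻¹ v_f(x)`. -/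
noncomputable def Tgen (p r : ℕ) (l : Fin r → ℝ) (f : ℝ → ℝ) (x h : ℝ) : ℝ :=
  expBasis p r l h ⬝ᵥ ((Vand p r l)⁻¹ *ᵥ vder (p + r) f x)

/-- The classical Taylor polynomial `T_d f (x,h) = ∑_{j=0}^d f^(j)(x) h^j / j!`. -/
noncomputable def Tcl (d : ℕ) (f : ℝ → ℝ) (x h : ℝ) : ℝ :=
  ∑ j ∈ Finset.range (d + 1), iteratedDeriv j f x / (Nat.factorial j : ℝ) * h ^ j

/-- The Euclidean norm on `Fin n → ℝ`. -/
noncomputable def enorm2 (n : ℕ) (v : Fin n → ℝ) : ℝ := Real.sqrt (∑ i, v i ^ 2)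

/-!
Write `φ_c` for the basis functions `expBasis p r l · c` and `a = V⁻¹ v_f(x)`. Row `n` of `V`
consists of the values `φ_c^(n)(0)`, so `V a = v_f(x)` says that `∑ a_c φ_c` has the same
derivatives of order `≤ d` at `0` as `f` at `x`. Hence the difference
`∂_h^j T_{p,Λ} f(x,h) - T_{d-j} f^(j)(x,h)` is `∑ a_c` times the Taylor remainder of order
`d - j` of `φ_c^(j)`. For the monomial columns (`c ≤ p`) this remainder vanishes. For the
exponential columns it is at most `|λ|^(d+1) e^(|λ| R) |h|^(d+1-j)`, and their coefficients only
involve `f^(i)(x)` with `i > p`, because the columns `c ≤ p` of `V` are `c! e_c`; since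
`k_j ≤ p + 1`, these derivatives are entries of `v_{f^(k_j)}(x)`.
-/

open Finset

section Taylor

lemma iteratedDeriv_iteratedDeriv (m n : ℕ) (f : ℝ → ℝ) :
    iteratedDeriv m (iteratedDeriv n f) = iteratedDeriv (n + m) f := by
  simp only [iteratedDeriv_eq_iterate, add_comm n m, Function.iterate_add]
  rfl

lemma Tcl_zero (g : ℝ → ℝ) (x h : ℝ) : Tcl 0 g x h = g x := by
  simp [Tcl]

lemma hasDerivAt_Tcl (N : ℕ) (g : ℝ → ℝ) (x u : ℝ) :
    HasDerivAt (Tcl (N + 1) g x) (Tcl N (deriv g) x u) u := by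
  have hterm : ∀ m : ℕ, HasDerivAt
      (fun u => iteratedDeriv (m + 1) g x / ((m + 1).factorial : ℝ) * u ^ (m + 1))
      (iteratedDeriv m (deriv g) x / (m.factorial : ℝ) * u ^ m) u := by
    intro m
    refine ((hasDerivAt_pow (m + 1) u).const_mul _).congr_deriv ?_
    rw [iteratedDeriv_succ', Nat.factorial_succ]
    push_cast
    field_simp
  have hTcl : Tcl (N + 1) g x = fun u => g x + ∑ m ∈ range (N + 1),
      iteratedDeriv (m + 1) g x / ((m + 1).factorial : ℝ) * u ^ (m + 1) := by
    funext u
    rw [Tcl, sum_range_succ']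
    simp [add_comm]
  rw [hTcl]
  exact (HasDerivAt.fun_sum fun m _ => hterm m).const_add (g x)

lemma Tcl_eq_sum_of_iteratedDeriv_eq {ι : Type*} [Fintype ι] (N : ℕ) {g : ℝ → ℝ}
    {G : ι → ℝ → ℝ} {a : ι → ℝ} {x y : ℝ}
    (hg : ∀ m ≤ N, iteratedDeriv m g x = ∑ i, a i * iteratedDeriv m (G i) y) (h : ℝ) :
    Tcl N g x h = ∑ i, a i * Tcl N (G i) y h := by
  simp only [Tcl, mul_sum]
  rw [sum_comm]
  refine sum_congr rfl fun m hm => ?_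
  rw [hg m (Nat.lt_succ_iff.mp (mem_range.mp hm)), sum_div, sum_mul]
  exact sum_congr rfl fun i _ => by ring

lemma abs_sub_le_of_hasDerivAt {G G' : ℝ → ℝ} {K t : ℝ}
    (hG : ∀ u, |u| ≤ |t| → HasDerivAt G (G' u) u) (hK : ∀ u, |u| ≤ |t| → |G' u| ≤ K) :
    |G t - G 0| ≤ K * |t| := by
  have hmem : ∀ u ∈ Set.Icc (-|t|) |t|, |u| ≤ |t| := fun u hu => abs_le.mpr hu
  simpa using Convex.norm_image_sub_le_of_norm_hasDerivWithin_le
    (fun u hu => (hG u (hmem u hu)).hasDerivWithinAt) (fun u hu => hK u (hmem u hu))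
    (convex_Icc (-|t|) |t|) (by simp : (0 : ℝ) ∈ Set.Icc (-|t|) |t|)
    ⟨neg_abs_le t, le_abs_self t⟩

lemma abs_sub_Tcl_le {N : ℕ} {g : ℝ → ℝ} (hg : ContDiff ℝ (N + 1 : ℕ) g) {x B M : ℝ}
    (hM : ∀ s, |s| ≤ B → |iteratedDeriv (N + 1) g (x + s)| ≤ M) {t : ℝ} (ht : |t| ≤ B) :
    |g (x + t) - Tcl N g x t| ≤ M * |t| ^ (N + 1) := by
  induction N generalizing g t with
  | zero =>
    have hd : Differentiable ℝ g := hg.differentiable (by simp)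
    have := abs_sub_le_of_hasDerivAt (G := fun u => g (x + u)) (G' := fun u => deriv g (x + u))
      (t := t) (fun u _ => ((hd _).hasDerivAt.comp u ((hasDerivAt_id u).const_add x)).congr_deriv
        (by simp)) (fun u hu => by simpa using hM u (hu.trans ht))
    simpa [Tcl_zero] using this
  | succ N ih =>
    have hM0 : 0 ≤ M := (abs_nonneg _).trans (hM 0 (by simpa using (abs_nonneg t).trans ht))
    have hd : Differentiable ℝ g := hg.differentiable (by simp)
    have hg' : ContDiff ℝ (N + 1 : ℕ) (deriv g) := by
      apply ContDiff.deriv'; exact_mod_cast hg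
    have hrem := abs_sub_le_of_hasDerivAt
      (G := fun u => g (x + u) - Tcl (N + 1) g x u)
      (G' := fun u => deriv g (x + u) - Tcl N (deriv g) x u) (t := t) (K := M * |t| ^ (N + 1))
      (fun u _ => (((hd _).hasDerivAt.comp u ((hasDerivAt_id u).const_add x)).congr_deriv
        (by simp)).sub (hasDerivAt_Tcl N g x u))
      (fun u hu => (ih hg' (fun s hs => by simpa [← iteratedDeriv_succ'] using hM s hs)
        (hu.trans ht)).trans (by gcongr))
    have hzero : Tcl (N + 1) g x 0 = g x := by simp [Tcl, sum_range_succ']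
    simpa [hzero, pow_succ, mul_assoc] using hrem

end Taylor

section ExpBasis

open scoped ContDiff

variable {p r : ℕ} (l : Fin r → ℝ)

lemma contDiff_expBasis (c : Fin (p + r + 1)) : ContDiff ℝ ∞ (expBasis p r l · c) := by
  unfold expBasis
  split_ifs <;> fun_prop

lemma iteratedDeriv_expBasis (n : ℕ) (c : Fin (p + r + 1)) (t : ℝ) :
    iteratedDeriv n (expBasis p r l · c) t =
      if hc : (c : ℕ) ≤ p then ((c : ℕ).descFactorial n : ℝ) * t ^ ((c : ℕ) - n)
      else l ⟨c - (p + 1), by have := c.isLt; omega⟩ ^ n *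
        Real.exp (l ⟨c - (p + 1), by have := c.isLt; omega⟩ * t) := by
  unfold expBasis
  split_ifs <;> simp

lemma Vand_apply_eq_iteratedDeriv (n c : Fin (p + r + 1)) :
    Vand p r l n c = iteratedDeriv n (expBasis p r l · c) 0 := by
  by_cases hc : (c : ℕ) ≤ p
  · simp only [Vand, Matrix.of_apply, expBasis, dif_pos hc, iteratedDeriv_fun_pow_zero]
    split_ifs <;> simp
  · simp [Vand, expBasis, hc]

end ExpBasis

section Vand

variable {p r : ℕ} (l : Fin r → ℝ)

lemma Vand_mulVec_single_of_le {i : Fin (p + r + 1)} (hi : (i : ℕ) ≤ p) :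
    Vand p r l *ᵥ Pi.single i 1 = Pi.single i ((i : ℕ).factorial : ℝ) := by
  funext n
  by_cases hn : n = i
  · subst hn; simp [Vand, hi]
  · simp [Vand, hi, hn, Fin.val_ne_of_ne hn]

/- A left null vector `v` vanishes on the indices `≤ p`, by the monomial columns. On the
remaining indices, the column of `λ_k` reads `λ_k^(p+1) ∑ m, v (p+1+m) λ_k^m = 0`: a
Vandermonde system in the distinct `λ_k`. -/
lemma det_Vand_ne_zero (h0 : ∀ k, l k ≠ 0) (hinj : Function.Injective l) :
    (Vand p r l).det ≠ 0 := by
  intro hdet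
  obtain ⟨v, hv, hvV⟩ := Matrix.exists_vecMul_eq_zero_iff.mpr hdet
  have hlow : ∀ i : Fin (p + r + 1), (i : ℕ) ≤ p → v i = 0 := by
    intro i hi
    have hvi : v ⬝ᵥ (Vand p r l *ᵥ Pi.single i 1) = 0 := by
      rw [Matrix.dotProduct_mulVec, hvV, zero_dotProduct]
    simpa [Vand_mulVec_single_of_le l hi, Nat.factorial_ne_zero] using hvi
  let col : Fin r → Fin (p + r + 1) := fun m => ⟨p + 1 + m, by omega⟩
  have hhigh : (fun m => v (col m)) = 0 := by
    refine Matrix.eq_zero_of_forall_index_sum_mul_pow_eq_zero hinj fun k => ?_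
    have hk : ∑ i, v i * Vand p r l i (col k) = 0 := by
      simpa [Matrix.vecMul, dotProduct] using congrFun hvV (col k)
    rw [← Fintype.sum_of_injective col (fun m n hmn => Fin.ext (by simpa [col] using hmn))
      (fun m => v (col m) * l k ^ (p + 1 + (m : ℕ))) _ ?_
      (fun m => by simp [col, Vand, show ¬p + 1 + (k : ℕ) ≤ p by omega])] at hk
    · have hfac : l k ^ (p + 1) * ∑ m, v (col m) * l k ^ (m : ℕ) = 0 := by
        rw [← hk, mul_sum]
        exact sum_congr rfl fun m _ => by ring
      exact (mul_eq_zero.mp hfac).resolve_left (pow_ne_zero _ (h0 k))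
    · intro i hi
      have hip : (i : ℕ) ≤ p := by
        by_contra hip
        exact hi ⟨⟨i - (p + 1), by omega⟩, Fin.ext (by simp [col]; omega)⟩
      rw [hlow i hip, zero_mul]
  apply hv
  funext i
  by_cases hi : (i : ℕ) ≤ p
  · exact hlow i hi
  · simpa [col, show p + 1 + (i - (p + 1)) = i by omega] using
      congrFun hhigh ⟨i - (p + 1), by omega⟩

lemma inv_Vand_apply_eq_zero (hdet : IsUnit (Vand p r l).det) {c i : Fin (p + r + 1)}
    (hc : p < c) (hi : (i : ℕ) ≤ p) : (Vand p r l)⁻¹ c i = 0 := by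
  have := congrFun (congrArg ((Vand p r l)⁻¹ *ᵥ ·) (Vand_mulVec_single_of_le l hi)) c
  rw [Matrix.mulVec_mulVec, Matrix.nonsing_inv_mul _ hdet, Matrix.one_mulVec] at this
  have hci : c ≠ i := fun h => by subst h; omega
  simpa [hci, Nat.factorial_ne_zero] using this.symm

end Vand

lemma abs_le_enorm2 {n : ℕ} (v : Fin n → ℝ) (i : Fin n) : |v i| ≤ enorm2 n v := by
  rw [enorm2, ← Real.sqrt_sq_eq_abs]
  exact Real.sqrt_le_sqrt (single_le_sum (fun j _ => sq_nonneg (v j)) (mem_univ i))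

lemma enorm2_nonneg (n : ℕ) (v : Fin n → ℝ) : 0 ≤ enorm2 n v :=
  Real.sqrt_nonneg _

section Tgen

open scoped ContDiff

variable {p r : ℕ} (l : Fin r → ℝ)

noncomputable def tgenCoeff (f : ℝ → ℝ) (x : ℝ) : Fin (p + r + 1) → ℝ :=
  (Vand p r l)⁻¹ *ᵥ vder (p + r) f x

lemma iteratedDeriv_Tgen (f : ℝ → ℝ) (x : ℝ) (j : ℕ) (t : ℝ) :
    iteratedDeriv j (fun t => Tgen p r l f x t) t =
      ∑ c, tgenCoeff l f x c * iteratedDeriv j (expBasis p r l · c) t := by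
  simp only [Tgen, dotProduct]
  rw [iteratedDeriv_fun_sum fun c _ =>
    (contDiff_infty.mp (contDiff_expBasis l c) j).contDiffAt.mul contDiffAt_const]
  exact sum_congr rfl fun c _ => by rw [iteratedDeriv_mul_const_field, mul_comm]; rfl

variable {l}

lemma iteratedDeriv_eq_sum_tgenCoeff (hdet : IsUnit (Vand p r l).det) (f : ℝ → ℝ) (x : ℝ)
    {n : ℕ} (hn : n ≤ p + r) :
    iteratedDeriv n f x = ∑ c, tgenCoeff l f x c * iteratedDeriv n (expBasis p r l · c) 0 := by
  have hrepr : Vand p r l *ᵥ tgenCoeff l f x = vder (p + r) f x := by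
    rw [tgenCoeff, Matrix.mulVec_mulVec, Matrix.mul_nonsing_inv _ hdet, Matrix.one_mulVec]
  have := congrFun hrepr ⟨n, by omega⟩
  simp only [Matrix.mulVec, dotProduct, vder, Vand_apply_eq_iteratedDeriv] at this
  rw [← this]
  exact sum_congr rfl fun c _ => mul_comm _ _

lemma Tcl_iteratedDeriv_eq_sum_tgenCoeff (hdet : IsUnit (Vand p r l).det) (f : ℝ → ℝ)
    (x : ℝ) {j : ℕ} (hj : j ≤ p + r) (h : ℝ) :
    Tcl (p + r - j) (iteratedDeriv j f) x h =
      ∑ c, tgenCoeff l f x c * Tcl (p + r - j) (iteratedDeriv j (expBasis p r l · c)) 0 h :=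
  Tcl_eq_sum_of_iteratedDeriv_eq _ (fun m hm => by
    simp only [iteratedDeriv_iteratedDeriv]
    exact iteratedDeriv_eq_sum_tgenCoeff hdet f x (by omega)) h

lemma abs_iteratedDeriv_expBasis_sub_Tcl_le (c : Fin (p + r + 1)) {j : ℕ} (hj : j ≤ p + r)
    {R M : ℝ}
    (hM : ∀ t, |t| ≤ R → |iteratedDeriv (p + r + 1) (expBasis p r l · c) t| ≤ M)
    {h : ℝ} (hh : |h| ≤ R) :
    |iteratedDeriv j (expBasis p r l · c) h -
        Tcl (p + r - j) (iteratedDeriv j (expBasis p r l · c)) 0 h| ≤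
      M * |h| ^ (p + r + 1 - j) := by
  have hsmooth : ContDiff ℝ (p + r - j + 1 : ℕ) (iteratedDeriv j (expBasis p r l · c)) := by
    rw [iteratedDeriv_eq_iterate]
    exact contDiff_infty.mp ((contDiff_expBasis l c).iterate_deriv j) _
  have := abs_sub_Tcl_le hsmooth (x := 0) (fun s hs => by
    rw [iteratedDeriv_iteratedDeriv, show j + (p + r - j + 1) = p + r + 1 by omega, zero_add]
    exact hM s hs) hh
  rwa [zero_add, show p + r - j + 1 = p + r + 1 - j by omega] at this

lemma iteratedDeriv_expBasis_of_le {c : Fin (p + r + 1)} (hc : (c : ℕ) ≤ p) (t : ℝ) :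
    iteratedDeriv (p + r + 1) (expBasis p r l · c) t = 0 := by
  rw [iteratedDeriv_expBasis, dif_pos hc, Nat.descFactorial_eq_zero_iff_lt.mpr (by omega),
    Nat.cast_zero, zero_mul]

lemma abs_iteratedDeriv_expBasis_le (c : Fin (p + r + 1)) {R t : ℝ} (ht : |t| ≤ R) :
    |iteratedDeriv (p + r + 1) (expBasis p r l · c) t| ≤
      ∑ k, |l k| ^ (p + r + 1) * Real.exp (|l k| * R) := by
  by_cases hc : (c : ℕ) ≤ p
  · rw [iteratedDeriv_expBasis_of_le hc, abs_zero]
    positivity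
  · set k : Fin r := ⟨c - (p + 1), by omega⟩
    calc |iteratedDeriv (p + r + 1) (expBasis p r l · c) t|
        = |l k| ^ (p + r + 1) * Real.exp (l k * t) := by
          simp [iteratedDeriv_expBasis, hc, k, abs_mul, abs_pow]
      _ ≤ |l k| ^ (p + r + 1) * Real.exp (|l k| * R) := by
          refine mul_le_mul_of_nonneg_left (Real.exp_le_exp.mpr ?_) (by positivity)
          calc l k * t ≤ |l k * t| := le_abs_self _
            _ ≤ |l k| * R := by rw [abs_mul]; gcongr
      _ ≤ ∑ k, |l k| ^ (p + r + 1) * Real.exp (|l k| * R) :=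
          single_le_sum (f := fun k => |l k| ^ (p + r + 1) * Real.exp (|l k| * R))
            (fun _ _ => by positivity) (mem_univ k)

lemma abs_tgenCoeff_le (hdet : IsUnit (Vand p r l).det) (f : ℝ → ℝ) (x : ℝ)
    {c : Fin (p + r + 1)} (hc : p < c) {k : ℕ} (hk : k ≤ p + 1) :
    |tgenCoeff l f x c| ≤ (∑ i, |(Vand p r l)⁻¹ c i|) *
      enorm2 (p + r - k + 1) (fun i => iteratedDeriv (k + (i : ℕ)) f x) := by
  rw [tgenCoeff, Matrix.mulVec, dotProduct, sum_mul]
  refine (abs_sum_le_sum_abs _ _).trans (sum_le_sum fun i _ => ?_)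
  by_cases hi : (i : ℕ) ≤ p
  · simp [inv_Vand_apply_eq_zero l hdet hc hi]
  · rw [abs_mul]
    gcongr
    simpa [vder, show k + (i - k) = i by omega] using
      abs_le_enorm2 (fun i : Fin (p + r - k + 1) => iteratedDeriv (k + (i : ℕ)) f x)
        ⟨i - k, by omega⟩

lemma abs_tgenCoeff_mul_remainder_le (hdet : IsUnit (Vand p r l).det) (f : ℝ → ℝ) (x : ℝ)
    (c : Fin (p + r + 1)) {j : ℕ} (hj : j ≤ p + r) {R h : ℝ} (hh : |h| ≤ R) :
    |tgenCoeff l f x c * (iteratedDeriv j (expBasis p r l · c) h -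
        Tcl (p + r - j) (iteratedDeriv j (expBasis p r l · c)) 0 h)| ≤
      (∑ i, |(Vand p r l)⁻¹ c i|) *
        enorm2 (p + r - min j (p + 1) + 1) (fun i => iteratedDeriv (min j (p + 1) + i) f x) *
        ((∑ k, |l k| ^ (p + r + 1) * Real.exp (|l k| * R)) * |h| ^ (p + r + 1 - j)) := by
  have hW := enorm2_nonneg (p + r - min j (p + 1) + 1)
    (fun i => iteratedDeriv (min j (p + 1) + i) f x)
  by_cases hc : (c : ℕ) ≤ p
  · have hpoly := abs_iteratedDeriv_expBasis_sub_Tcl_le (l := l) c hj (M := 0)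
      (fun t _ => by rw [iteratedDeriv_expBasis_of_le hc, abs_zero]) hh
    rw [zero_mul, abs_nonpos_iff] at hpoly
    rw [hpoly, mul_zero, abs_zero]
    positivity
  · rw [abs_mul]
    exact mul_le_mul (abs_tgenCoeff_le hdet f x (by omega) (min_le_right _ _))
      (abs_iteratedDeriv_expBasis_sub_Tcl_le c hj
        (fun t ht => abs_iteratedDeriv_expBasis_le c ht) hh) (abs_nonneg _) (by positivity)

end Tgen

theorem tgen_deriv_sub_taylor_bound_general (p r : ℕ) (l : Fin r → ℝ)
    (h0 : ∀ k, l k ≠ 0) (hinj : Function.Injective l)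
    (R : ℝ) :
    ∃ C > 0, ∀ f : ℝ → ℝ, ContDiff ℝ (p + r : ℕ) f →
      ∀ j : ℕ, j ≤ p + r → ∀ x h : ℝ, |h| ≤ R →
        |iteratedDeriv j (fun t => Tgen p r l f x t) h -
            Tcl (p + r - j) (iteratedDeriv j f) x h| ≤
          C * enorm2 (p + r - min j (p + 1) + 1)
              (fun i => iteratedDeriv (min j (p + 1) + (i : ℕ)) f x) *
            |h| ^ (p + r + 1 - j) := by
  have hdet : IsUnit (Vand p r l).det := (det_Vand_ne_zero l h0 hinj).isUnit
  set K := ∑ c, ∑ i, |(Vand p r l)⁻¹ c i|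
  set M := ∑ k, |l k| ^ (p + r + 1) * Real.exp (|l k| * R)
  refine ⟨K * M + 1, by positivity, fun f _ j hj x h hh => ?_⟩
  set W := enorm2 (p + r - min j (p + 1) + 1) (fun i => iteratedDeriv (min j (p + 1) + i) f x)
  have hW : 0 ≤ W := enorm2_nonneg _ _
  rw [iteratedDeriv_Tgen, Tcl_iteratedDeriv_eq_sum_tgenCoeff hdet f x hj, ← sum_sub_distrib]
  simp only [← mul_sub]
  calc _ ≤ ∑ c, (∑ i, |(Vand p r l)⁻¹ c i|) * W * (M * |h| ^ (p + r + 1 - j)) :=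
        (abs_sum_le_sum_abs _ _).trans
          (sum_le_sum fun c _ => abs_tgenCoeff_mul_remainder_le hdet f x c hj hh)
    _ = K * M * W * |h| ^ (p + r + 1 - j) := by rw [← sum_mul, ← sum_mul]; ring
    _ ≤ (K * M + 1) * W * |h| ^ (p + r + 1 - j) := by gcongr; linarith

/-- for `j = 0,…,d`, with `k_j = min{j, p+1}`,
`|∂_h^j T_{p,Λ} f(x,h) - T_{d-j} f^(j)(x,h)| ≤ C |v_{f^{(k_j)}}(x)|₂ |h|^{d+1-j}`
for `|h| ≤ R`, where `C` depends only on `Λ` and `R`. -/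
theorem tgen_deriv_sub_taylor_bound (p r : ℕ) (hr : 1 ≤ r) (l : Fin r → ℝ)
    (h0 : ∀ k, l k ≠ 0) (hinj : Function.Injective l)
    (R : ℝ) (hR0 : 0 < R) (hR1 : R < 1) :
    ∃ C > 0, ∀ f : ℝ → ℝ, ContDiff ℝ (p + r : ℕ) f →
      ∀ j : ℕ, j ≤ p + r → ∀ x h : ℝ, |h| ≤ R →
        |iteratedDeriv j (fun t => Tgen p r l f x t) h -
            Tcl (p + r - j) (iteratedDeriv j f) x h| ≤
          C * enorm2 (p + r - min j (p + 1) + 1)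
              (fun i => iteratedDeriv (min j (p + 1) + (i : ℕ)) f x) *
            |h| ^ (p + r + 1 - j) :=
  tgen_deriv_sub_taylor_bound_general p r l h0 hinj R
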